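/- arXiv:2112.13257 — 3 statements merged into one kernel-verified Lean document; each statement's English description precedes it below -/
import Mathlib

section
/- For every k ≥ 1 and all z, z' ∈ ℝ^{np}: ‖Ṽ(k)^{-1} ∇f(z) − Ṽ(k−1)^{-1} ∇f(z')‖ ≤ ṽ L ‖z − z'‖_R + 2 ṽ² √n κ₃ σ_R^{k−1} ‖∇f(z)‖. -/
open Matrix Filter
open scoped Kronecker

noncomputable section

/-- Euclidean norm on `ι → ℝ`. -/
def eucNorm {ι : Type*} [Fintype ι] (z : ι → ℝ) : ℝ := Real.sqrt (∑ i, z i ^ 2)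

/-- Spectral norm (operator 2-norm) of a square real matrix. -/
def specNorm {ι : Type*} [Fintype ι] (A : Matrix ι ι ℝ) : ℝ :=
  sSup {c : ℝ | ∃ z : ι → ℝ, eucNorm z ≤ 1 ∧ c = eucNorm (A.mulVec z)}

/-- Matrix norm induced by a vector norm `N`: `sup_{z ≠ 0} N (A z) / N z`. -/
def opNorm {ι : Type*} [Fintype ι] (N : (ι → ℝ) → ℝ) (A : Matrix ι ι ℝ) : ℝ :=
  sSup {c : ℝ | ∃ z : ι → ℝ, z ≠ 0 ∧ c = N (A.mulVec z) / N z}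

/-- `g` is the gradient of `f : ℝ^p → ℝ`. -/
def IsGradient {p : ℕ} (f : (Fin p → ℝ) → ℝ) (g : (Fin p → ℝ) → Fin p → ℝ) : Prop :=
  ∀ x, HasFDerivAt f (∑ j, g x j • (ContinuousLinearMap.proj j : (Fin p → ℝ) →L[ℝ] ℝ)) x

/-- `R = R̄ ⊗ I_p`. -/
def RK (n p : ℕ) (Rb : Matrix (Fin n) (Fin n) ℝ) :
    Matrix (Fin n × Fin p) (Fin n × Fin p) ℝ :=
  Rb ⊗ₖ (1 : Matrix (Fin p) (Fin p) ℝ)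

/-- `V_∞ = (1_n π^T) ⊗ I_p`. -/
def VinfK (n p : ℕ) (π : Fin n → ℝ) :
    Matrix (Fin n × Fin p) (Fin n × Fin p) ℝ :=
  (Matrix.of (fun _ j => π j) : Matrix (Fin n) (Fin n) ℝ) ⊗ₖ (1 : Matrix (Fin p) (Fin p) ℝ)

/-- `V(k) = R̄^k ⊗ I_p`. -/
def VK (n p : ℕ) (Rb : Matrix (Fin n) (Fin n) ℝ) (k : ℕ) :
    Matrix (Fin n × Fin p) (Fin n × Fin p) ℝ :=
  (Rb ^ k) ⊗ₖ (1 : Matrix (Fin p) (Fin p) ℝ)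

/-- `Ṽ(k)⁻¹ = diag(((R̄^k)_{11})⁻¹, …, ((R̄^k)_{nn})⁻¹) ⊗ I_p`. -/
def VtinvK (n p : ℕ) (Rb : Matrix (Fin n) (Fin n) ℝ) (k : ℕ) :
    Matrix (Fin n × Fin p) (Fin n × Fin p) ℝ :=
  Matrix.diagonal (fun q => ((Rb ^ k) q.1 q.1)⁻¹)

/-- `∇f(z) = (∇f_1(z_1), …, ∇f_n(z_n))` block-wise. -/
def gradf {n p : ℕ} (g : Fin n → (Fin p → ℝ) → Fin p → ℝ) (z : Fin n × Fin p → ℝ) :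
    Fin n × Fin p → ℝ :=
  fun q => g q.1 (fun j => z (q.1, j)) q.2

/-- `x*_vec = 1_n ⊗ x*`. -/
def starVec (n p : ℕ) (xstar : Fin p → ℝ) : Fin n × Fin p → ℝ := fun q => xstar q.2

end

/-!
Write `Ṽ(k)⁻¹∇f(z) − Ṽ(k−1)⁻¹∇f(z')` as `Ṽ(k−1)⁻¹(∇f(z) − ∇f(z')) + (Ṽ(k)⁻¹ − Ṽ(k−1)⁻¹)∇f(z)`.
The first term is at most `ṽ L ‖z − z'‖ ≤ ṽ L ‖z − z'‖_R`. The second is diagonal with entries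
`a_k⁻¹ − a_{k−1}⁻¹ = (a_{k−1} − a_k) a_k⁻¹ a_{k−1}⁻¹`, where `a_k = (R̄^k)_{ii}`. Since
`(R − V_∞)^k = (R̄^k − 1_n π^T) ⊗ I_p` for `k ≥ 1`, testing `‖(R − V_∞)^k‖_R ≤ σ_R^k` on a unit
vector gives `|a_k − π_i| ≤ κ₃ σ_R^k`, so that entry is at most `2 ṽ² κ₃ σ_R^{k−1}`. The same
convergence `a_k → π_i > 0`, together with `a_k ≥ r_{ii}^k > 0`, is what makes `ṽ` finite.
-/
section EucNorm

variable {ι : Type*} [Fintype ι]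

theorem eucNorm_eq_norm (z : ι → ℝ) :
    eucNorm z = ‖(WithLp.toLp 2 z : EuclideanSpace ℝ ι)‖ := by
  simp [eucNorm, EuclideanSpace.norm_eq]

theorem eucNorm_nonneg (z : ι → ℝ) : 0 ≤ eucNorm z := Real.sqrt_nonneg _

theorem eucNorm_pos {z : ι → ℝ} (hz : z ≠ 0) : 0 < eucNorm z := by
  rw [eucNorm_eq_norm, norm_pos_iff]
  exact fun h => hz (congrArg WithLp.ofLp h)

theorem eucNorm_zero : eucNorm (0 : ι → ℝ) = 0 := by simp [eucNorm]

theorem eucNorm_add_le (y z : ι → ℝ) : eucNorm (y + z) ≤ eucNorm y + eucNorm z := by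
  simpa only [eucNorm_eq_norm, WithLp.toLp_add] using norm_add_le _ _

theorem abs_le_eucNorm (z : ι → ℝ) (i : ι) : |z i| ≤ eucNorm z := by
  simpa only [eucNorm_eq_norm, Real.norm_eq_abs] using
    PiLp.norm_apply_le (WithLp.toLp 2 z : EuclideanSpace ℝ ι) i

theorem eucNorm_single [DecidableEq ι] (i : ι) (a : ℝ) : eucNorm (Pi.single i a) = |a| := by
  simpa only [eucNorm_eq_norm, PiLp.toLp_single, Real.norm_eq_abs] using
    PiLp.norm_single 2 (fun _ => ℝ) i a

theorem eucNorm_sq (z : ι → ℝ) : eucNorm z ^ 2 = ∑ i, z i ^ 2 :=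
  Real.sq_sqrt (Finset.sum_nonneg fun _ _ => sq_nonneg _)

theorem eucNorm_sq_eq_sum_blocks {κ : Type*} [Fintype κ] (z : ι × κ → ℝ) :
    eucNorm z ^ 2 = ∑ i, eucNorm (fun c => z (i, c)) ^ 2 := by
  simp only [eucNorm_sq, Fintype.sum_prod_type]

theorem eucNorm_mulVec_le [DecidableEq ι] (A : Matrix ι ι ℝ) (y : ι → ℝ) :
    eucNorm (A *ᵥ y) ≤ ‖Matrix.toEuclideanCLM (𝕜 := ℝ) A‖ * eucNorm y := by
  simpa only [eucNorm_eq_norm, Matrix.toEuclideanCLM_toLp] using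
    (Matrix.toEuclideanCLM (𝕜 := ℝ) A).le_opNorm (WithLp.toLp 2 y)

theorem eucNorm_diagonal_mulVec_le [DecidableEq ι] {d : ι → ℝ} {M : ℝ} (hM0 : 0 ≤ M)
    (hM : ∀ q, |d q| ≤ M) (y : ι → ℝ) :
    eucNorm (diagonal d *ᵥ y) ≤ M * eucNorm y := by
  rw [eucNorm, Real.sqrt_le_left (mul_nonneg hM0 (eucNorm_nonneg y)), mul_pow, eucNorm_sq,
    Finset.mul_sum]
  refine Finset.sum_le_sum fun q _ => ?_
  rw [mulVec_diagonal, mul_pow, ← sq_abs (d q)]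
  gcongr
  exact hM q

theorem eucNorm_diagonal_mulVec_sub_le [DecidableEq ι] {d d' : ι → ℝ} {v c : ℝ} (hv0 : 0 ≤ v)
    (hc0 : 0 ≤ c) (hd' : ∀ q, |d' q| ≤ v) (hdd' : ∀ q, |d q - d' q| ≤ c) (u u' : ι → ℝ) :
    eucNorm (diagonal d *ᵥ u - diagonal d' *ᵥ u') ≤
      v * eucNorm (u - u') + c * eucNorm u := by
  have hsplit : diagonal d *ᵥ u - diagonal d' *ᵥ u' =
      diagonal d' *ᵥ (u - u') + diagonal (fun q => d q - d' q) *ᵥ u := by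
    rw [← diagonal_sub, mulVec_sub, sub_mulVec]
    abel
  rw [hsplit]
  exact (eucNorm_add_le _ _).trans (add_le_add (eucNorm_diagonal_mulVec_le hv0 hd' _)
    (eucNorm_diagonal_mulVec_le hc0 hdd' _))

end EucNorm

section OperatorNorms

variable {ι : Type*} [Fintype ι]

theorem eucNorm_mulVec_le_specNorm (A : Matrix ι ι ℝ) {z : ι → ℝ} (hz : eucNorm z ≤ 1) :
    eucNorm (A *ᵥ z) ≤ specNorm A := by
  classical
  refine le_csSup ⟨‖Matrix.toEuclideanCLM (𝕜 := ℝ) A‖, ?_⟩ ⟨z, hz, rfl⟩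
  rintro _ ⟨y, hy, rfl⟩
  exact (eucNorm_mulVec_le A y).trans (mul_le_of_le_one_right (norm_nonneg _) hy)

theorem specNorm_le {A : Matrix ι ι ℝ} {C : ℝ} (hC0 : 0 ≤ C)
    (hC : ∀ y, eucNorm (A *ᵥ y) ≤ C * eucNorm y) : specNorm A ≤ C := by
  refine csSup_le ⟨_, 0, by simp [eucNorm_zero], rfl⟩ ?_
  rintro _ ⟨y, hy, rfl⟩
  exact (hC y).trans (mul_le_of_le_one_right hC0 hy)

theorem abs_le_specNorm_diagonal [DecidableEq ι] (d : ι → ℝ) (q : ι) :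
    |d q| ≤ specNorm (diagonal d) := by
  have h := eucNorm_mulVec_le_specNorm (diagonal d) ((eucNorm_single q 1).trans abs_one).le
  rwa [diagonal_mulVec_single, mul_one, eucNorm_single] at h

theorem specNorm_diagonal_le_sum_abs [DecidableEq ι] (d : ι → ℝ) :
    specNorm (diagonal d) ≤ ∑ q, |d q| :=
  specNorm_le (Finset.sum_nonneg fun q _ => abs_nonneg (d q)) <| eucNorm_diagonal_mulVec_le
    (Finset.sum_nonneg fun q _ => abs_nonneg (d q))
    fun q => Finset.single_le_sum (f := fun q => |d q|) (fun q _ => abs_nonneg (d q))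
      (Finset.mem_univ q)

theorem opNorm_nonneg {N : (ι → ℝ) → ℝ} (hN : ∀ z, eucNorm z ≤ N z) (A : Matrix ι ι ℝ) :
    0 ≤ opNorm N A := by
  refine Real.sSup_nonneg ?_
  rintro _ ⟨y, -, rfl⟩
  exact div_nonneg ((eucNorm_nonneg _).trans (hN _)) ((eucNorm_nonneg _).trans (hN _))

theorem one_le_of_eucNorm_le_of_le_mul_eucNorm [Nonempty ι] {N : (ι → ℝ) → ℝ} {κ : ℝ}
    (hN : ∀ z, eucNorm z ≤ N z) (hNκ : ∀ z, N z ≤ κ * eucNorm z) : 1 ≤ κ := by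
  classical
  obtain ⟨i⟩ := ‹Nonempty ι›
  have h := (hN _).trans (hNκ (Pi.single i 1))
  rwa [eucNorm_single, abs_one, mul_one] at h

theorem mulVec_le_opNorm_mul {N : (ι → ℝ) → ℝ} {κ : ℝ} (hκ : 0 ≤ κ)
    (hN : ∀ z, eucNorm z ≤ N z) (hNκ : ∀ z, N z ≤ κ * eucNorm z) (A : Matrix ι ι ℝ)
    (y : ι → ℝ) : N (A *ᵥ y) ≤ opNorm N A * N y := by
  classical
  have hpos : ∀ {w : ι → ℝ}, w ≠ 0 → 0 < N w := fun hw => (eucNorm_pos hw).trans_le (hN _)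
  rcases eq_or_ne y 0 with rfl | hy
  · have h0 : N 0 = 0 :=
      le_antisymm (by simpa [eucNorm_zero] using hNκ 0) (by simpa [eucNorm_zero] using hN 0)
    simp [h0]
  refine (div_le_iff₀ (hpos hy)).1 (le_csSup ⟨κ * ‖Matrix.toEuclideanCLM (𝕜 := ℝ) A‖, ?_⟩
    ⟨y, hy, rfl⟩)
  rintro _ ⟨w, hw, rfl⟩
  rw [div_le_iff₀ (hpos hw), mul_assoc]
  exact (hNκ _).trans (mul_le_mul_of_nonneg_left
    ((eucNorm_mulVec_le A w).trans (mul_le_mul_of_nonneg_left (hN w) (norm_nonneg _))) hκ)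

theorem pow_mulVec_le_opNorm_pow_mul [DecidableEq ι] {N : (ι → ℝ) → ℝ} {κ : ℝ} (hκ : 0 ≤ κ)
    (hN : ∀ z, eucNorm z ≤ N z) (hNκ : ∀ z, N z ≤ κ * eucNorm z) (A : Matrix ι ι ℝ)
    (j : ℕ) (y : ι → ℝ) : N ((A ^ j) *ᵥ y) ≤ opNorm N A ^ j * N y := by
  induction j with
  | zero => simp
  | succ j ih =>
    rw [pow_succ', ← mulVec_mulVec, pow_succ', mul_assoc]
    exact (mulVec_le_opNorm_mul hκ hN hNκ A _).trans
      (mul_le_mul_of_nonneg_left ih (opNorm_nonneg hN A))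

theorem abs_pow_apply_self_le [DecidableEq ι] {N : (ι → ℝ) → ℝ} {κ : ℝ} (hκ : 0 ≤ κ)
    (hN : ∀ z, eucNorm z ≤ N z) (hNκ : ∀ z, N z ≤ κ * eucNorm z) (A : Matrix ι ι ℝ)
    (j : ℕ) (q : ι) : |(A ^ j) q q| ≤ κ * opNorm N A ^ j := by
  have h := (pow_mulVec_le_opNorm_pow_mul hκ hN hNκ A j (Pi.single q 1)).trans
    (mul_le_mul_of_nonneg_left (hNκ _) (pow_nonneg (opNorm_nonneg hN A) j))
  rw [mulVec_single_one, eucNorm_single, abs_one, mul_one, mul_comm] at h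
  exact (abs_le_eucNorm ((A ^ j).col q) q).trans ((hN _).trans h)

end OperatorNorms

section StochasticMatrix

variable {ι : Type*} [Fintype ι] [DecidableEq ι] {P : Matrix ι ι ℝ} {π : ι → ℝ}

theorem sub_stationary_pow_succ (hrow : ∀ i, ∑ j, P i j = 1) (hπsum : ∑ i, π i = 1)
    (hπstat : vecMul π P = π) (j : ℕ) :
    (P - of fun _ j => π j) ^ (j + 1) = P ^ (j + 1) - of fun _ j => π j := by
  set M : Matrix ι ι ℝ := of fun _ j => π j
  have hPM : P * M = M := by
    ext i j
    simp only [M, mul_apply, of_apply, ← Finset.sum_mul, hrow, one_mul]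
  have hMP : M * P = M := by
    ext i j
    simpa [M, mul_apply, vecMul, dotProduct] using congrFun hπstat j
  have hMM : M * M = M := by
    ext i j
    simp only [M, mul_apply, of_apply, ← Finset.sum_mul, hπsum, one_mul]
  have hPjM : ∀ j : ℕ, P ^ j * M = M := fun j => by
    induction j with
    | zero => rw [pow_zero, one_mul]
    | succ j ih => rw [pow_succ, mul_assoc, hPM, ih]
  induction j with
  | zero => rw [zero_add, pow_one, pow_one]
  | succ j ih =>
    rw [pow_succ, ih, sub_mul, mul_sub, mul_sub, hPjM, hMP, hMM, ← pow_succ]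
    abel

theorem pow_apply_self_ge (hP : ∀ i j, 0 ≤ P i j) (j : ℕ) (i : ι) :
    P i i ^ j ≤ (P ^ j) i i := by
  induction j with
  | zero => simp
  | succ j ih =>
    rw [pow_succ, pow_succ, mul_apply]
    exact (mul_le_mul_of_nonneg_right ih (hP i i)).trans <|
      Finset.single_le_sum (f := fun l => (P ^ j) i l * P l i)
        (fun l _ => mul_nonneg (pow_apply_nonneg hP j i l) (hP l i)) (Finset.mem_univ i)

end StochasticMatrix

theorem tendsto_of_abs_sub_le_geometric {u : ℕ → ℝ} {a κ σ : ℝ} (hσ0 : 0 ≤ σ) (hσ1 : σ < 1)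
    (h : ∀ j, |u j - a| ≤ κ * σ ^ j) : Tendsto u atTop (nhds a) := by
  refine tendsto_iff_norm_sub_tendsto_zero.2 (squeeze_zero (fun _ => norm_nonneg _) h ?_)
  simpa using (tendsto_pow_atTop_nhds_zero_of_lt_one hσ0 hσ1).const_mul κ

theorem abs_inv_succ_sub_inv_le {u : ℕ → ℝ} {a κ σ v : ℝ} (hu : ∀ j, u j ≠ 0)
    (hv : ∀ j, |(u j)⁻¹| ≤ v) (hσ0 : 0 ≤ σ) (hσ1 : σ ≤ 1) (h : ∀ j, |u j - a| ≤ κ * σ ^ j)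
    (m : ℕ) : |(u (m + 1))⁻¹ - (u m)⁻¹| ≤ 2 * v ^ 2 * κ * σ ^ m := by
  have hκ : 0 ≤ κ := by simpa using (abs_nonneg _).trans (h 0)
  have hv0 : 0 ≤ v := (abs_nonneg _).trans (hv 0)
  have hσm : σ ^ (m + 1) ≤ σ ^ m := pow_le_pow_of_le_one hσ0 hσ1 m.le_succ
  have hsplit :
      (u (m + 1))⁻¹ - (u m)⁻¹ = (u m - a - (u (m + 1) - a)) * (u (m + 1))⁻¹ * (u m)⁻¹ := by
    field_simp [hu m, hu (m + 1)]
    ring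
  rw [hsplit, abs_mul, abs_mul]
  calc |u m - a - (u (m + 1) - a)| * |(u (m + 1))⁻¹| * |(u m)⁻¹|
      ≤ (κ * σ ^ m + κ * σ ^ (m + 1)) * v * v := by
        gcongr
        · exact (abs_sub _ _).trans (add_le_add (h m) (h (m + 1)))
        · exact hv _
        · exact hv _
    _ ≤ (κ * σ ^ m + κ * σ ^ m) * v * v := by gcongr
    _ = 2 * v ^ 2 * κ * σ ^ m := by ring

theorem eucNorm_gradf_sub_le {n p : ℕ} {g : Fin n → (Fin p → ℝ) → Fin p → ℝ} {L : ℝ}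
    (hL : 0 ≤ L) (hLip : ∀ i x x', eucNorm (g i x - g i x') ≤ L * eucNorm (x - x'))
    (z z' : Fin n × Fin p → ℝ) : eucNorm (gradf g z - gradf g z') ≤ L * eucNorm (z - z') := by
  rw [← pow_le_pow_iff_left₀ (eucNorm_nonneg _) (mul_nonneg hL (eucNorm_nonneg _)) two_ne_zero,
    mul_pow, eucNorm_sq_eq_sum_blocks, eucNorm_sq_eq_sum_blocks, Finset.mul_sum]
  refine Finset.sum_le_sum fun i _ => ?_
  rw [← mul_pow]
  have hblock : (fun c => (gradf g z - gradf g z') (i, c)) =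
      g i (fun c => z (i, c)) - g i (fun c => z' (i, c)) := rfl
  rw [hblock]
  exact pow_le_pow_left₀ (eucNorm_nonneg _) (hLip i _ _) 2

theorem RK_sub_VinfK (n p : ℕ) (Rb : Matrix (Fin n) (Fin n) ℝ) (π : Fin n → ℝ) :
    RK n p Rb - VinfK n p π = blockDiagonal fun _ => Rb - of fun _ j => π j := by
  rw [RK, VinfK, kronecker_one, kronecker_one, ← blockDiagonal_sub]
  rfl

theorem abs_pow_apply_self_sub_le {n p : ℕ} (hp : 1 ≤ p) {Rb : Matrix (Fin n) (Fin n) ℝ}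
    {π : Fin n → ℝ} (hrow : ∀ i, ∑ j, Rb i j = 1) (hπ0 : ∀ i, 0 ≤ π i) (hπsum : ∑ i, π i = 1)
    (hπstat : vecMul π Rb = π) {N : (Fin n × Fin p → ℝ) → ℝ} {κ : ℝ} (hκ : 1 ≤ κ)
    (hN : ∀ z, eucNorm z ≤ N z) (hNκ : ∀ z, N z ≤ κ * eucNorm z) (j : ℕ) (i : Fin n) :
    |(Rb ^ j) i i - π i| ≤ κ * opNorm N (RK n p Rb - VinfK n p π) ^ j := by
  cases j with
  | zero =>
    have hπ1 : π i ≤ 1 :=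
      hπsum ▸ Finset.single_le_sum (fun l _ => hπ0 l) (Finset.mem_univ i)
    rw [pow_zero, pow_zero, one_apply_eq, mul_one, abs_le]
    constructor <;> linarith [hπ0 i]
  | succ j =>
    have hentry : ((RK n p Rb - VinfK n p π) ^ (j + 1)) (i, ⟨0, hp⟩) (i, ⟨0, hp⟩) =
        (Rb ^ (j + 1)) i i - π i := by
      rw [RK_sub_VinfK, ← blockDiagonal_pow, blockDiagonal_apply_eq, Pi.pow_apply,
        sub_stationary_pow_succ hrow hπsum hπstat, Matrix.sub_apply, of_apply]
    simpa only [hentry] using abs_pow_apply_self_le (zero_le_one.trans hκ) hN hNκ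
      (RK n p Rb - VinfK n p π) (j + 1) (i, ⟨0, hp⟩)

theorem abs_inv_pow_apply_le_specNorm_VtinvK {n p : ℕ} (hp : 1 ≤ p)
    (Rb : Matrix (Fin n) (Fin n) ℝ) (j : ℕ) (i : Fin n) :
    |((Rb ^ j) i i)⁻¹| ≤ specNorm (VtinvK n p Rb j) :=
  abs_le_specNorm_diagonal (fun q : Fin n × Fin p => ((Rb ^ j) q.1 q.1)⁻¹) (i, ⟨0, hp⟩)

theorem bddAbove_range_specNorm_VtinvK {n p : ℕ} {Rb : Matrix (Fin n) (Fin n) ℝ}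
    {π : Fin n → ℝ} (hπ : ∀ i, π i ≠ 0)
    (hlim : ∀ i, Tendsto (fun j => (Rb ^ j) i i) atTop (nhds (π i))) :
    BddAbove (Set.range fun k => specNorm (VtinvK n p Rb k)) := by
  obtain ⟨C, hC⟩ := (tendsto_finsetSum (Finset.univ : Finset (Fin n × Fin p))
    fun q _ => ((hlim q.1).inv₀ (hπ q.1)).abs).bddAbove_range
  refine ⟨C, ?_⟩
  rintro _ ⟨k, rfl⟩
  exact (specNorm_diagonal_le_sum_abs _).trans (hC ⟨k, rfl⟩)

theorem stmt12_general (n p : ℕ) (hn : 1 ≤ n) (hp : 1 ≤ p) (Rb : Matrix (Fin n) (Fin n) ℝ)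
    (hnonneg : ∀ i j, 0 ≤ Rb i j) (hrow : ∀ i, ∑ j, Rb i j = 1)
    (hdiag : ∀ i, 0 < Rb i i)
    (π : Fin n → ℝ) (hπpos : ∀ i, 0 < π i) (hπsum : ∑ i, π i = 1)
    (hπstat : Matrix.vecMul π Rb = π)
    (g : Fin n → (Fin p → ℝ) → Fin p → ℝ)
    (L : ℝ) (hL : 0 < L)
    (hLip : ∀ i x x', eucNorm (g i x - g i x') ≤ L * eucNorm (x - x'))
    (NR : (Fin n × Fin p → ℝ) → ℝ)
    (hNRge : ∀ z, eucNorm z ≤ NR z)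
    (κ₃ : ℝ) (hκ₃R : ∀ z, NR z ≤ κ₃ * eucNorm z)
    (vt : ℝ) (hvt : vt = ⨆ k : ℕ, specNorm (VtinvK n p Rb k))
    (σR : ℝ) (hσRdef : σR = opNorm NR (RK n p Rb - VinfK n p π))
    (hσR1 : σR < 1) :
    ∀ k : ℕ, 1 ≤ k → ∀ z z' : Fin n × Fin p → ℝ,
      eucNorm ((VtinvK n p Rb k).mulVec (gradf g z)
          - (VtinvK n p Rb (k - 1)).mulVec (gradf g z')) ≤
        vt * L * NR (z - z')
          + 2 * vt ^ 2 * Real.sqrt n * κ₃ * σR ^ (k - 1) * eucNorm (gradf g z) := by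
  have : Nonempty (Fin n × Fin p) := ⟨(⟨0, hn⟩, ⟨0, hp⟩)⟩
  have hκ₃ : 1 ≤ κ₃ := one_le_of_eucNorm_le_of_le_mul_eucNorm hNRge hκ₃R
  have hσ0 : 0 ≤ σR := hσRdef ▸ opNorm_nonneg hNRge _
  have hclose : ∀ j i, |(Rb ^ j) i i - π i| ≤ κ₃ * σR ^ j := hσRdef ▸
    abs_pow_apply_self_sub_le hp hrow (fun i => (hπpos i).le) hπsum hπstat hκ₃ hNRge hκ₃R
  have hne : ∀ j i, (Rb ^ j) i i ≠ 0 := fun j i =>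
    ((pow_pos (hdiag i) j).trans_le (pow_apply_self_ge hnonneg j i)).ne'
  have hinv : ∀ j i, |((Rb ^ j) i i)⁻¹| ≤ vt := fun j i => hvt ▸
    (abs_inv_pow_apply_le_specNorm_VtinvK hp Rb j i).trans (le_ciSup
      (bddAbove_range_specNorm_VtinvK (fun i => (hπpos i).ne')
        fun i => tendsto_of_abs_sub_le_geometric hσ0 hσR1 (hclose · i)) j)
  have hvt0 : 0 ≤ vt := (abs_nonneg _).trans (hinv 0 ⟨0, hn⟩)
  intro k hk z z'
  obtain ⟨m, rfl⟩ := Nat.exists_eq_add_of_le' hk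
  have hcoef : 0 ≤ 2 * vt ^ 2 * κ₃ * σR ^ m := by
    have := zero_le_one.trans hκ₃
    positivity
  rw [Nat.add_sub_cancel]
  calc _ ≤ vt * eucNorm (gradf g z - gradf g z') +
        2 * vt ^ 2 * κ₃ * σR ^ m * eucNorm (gradf g z) :=
        eucNorm_diagonal_mulVec_sub_le hvt0 hcoef (fun q => hinv m q.1)
          (fun q => abs_inv_succ_sub_inv_le (hne · q.1) (hinv · q.1) hσ0 hσR1.le (hclose · q.1) m)
          _ _
    _ ≤ vt * (L * NR (z - z')) +
        2 * vt ^ 2 * κ₃ * σR ^ m * eucNorm (gradf g z) * Real.sqrt n := by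
      refine add_le_add (mul_le_mul_of_nonneg_left ?_ hvt0)
        (le_mul_of_one_le_right (mul_nonneg hcoef (eucNorm_nonneg _))
          (Real.one_le_sqrt.2 (by exact_mod_cast hn)))
      exact (eucNorm_gradf_sub_le hL.le hLip z z').trans
        (mul_le_mul_of_nonneg_left (hNRge _) hL.le)
    _ = _ := by ring

/-- Lemma 4(d): for `k ≥ 1` and all `z, z'`,
`‖Ṽ(k)⁻¹∇f(z) − Ṽ(k−1)⁻¹∇f(z')‖ ≤ ṽ L ‖z − z'‖_R + 2 ṽ² √n κ₃ σ_R^{k−1} ‖∇f(z)‖`. -/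
theorem stmt12 (n p : ℕ) (hn : 1 ≤ n) (hp : 1 ≤ p) (Rb : Matrix (Fin n) (Fin n) ℝ)
    (hnonneg : ∀ i j, 0 ≤ Rb i j) (hrow : ∀ i, ∑ j, Rb i j = 1)
    (hdiag : ∀ i, 0 < Rb i i)
    (hirr : ∀ i j, ∃ k : ℕ, 0 < (Rb ^ k) i j)
    (π : Fin n → ℝ) (hπpos : ∀ i, 0 < π i) (hπsum : ∑ i, π i = 1)
    (hπstat : Matrix.vecMul π Rb = π)
    (f : Fin n → (Fin p → ℝ) → ℝ) (g : Fin n → (Fin p → ℝ) → Fin p → ℝ)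
    (L : ℝ) (hL : 0 < L)
    (hgrad : ∀ i, IsGradient (f i) (g i))
    (hLip : ∀ i x x', eucNorm (g i x - g i x') ≤ L * eucNorm (x - x'))
    (NR : (Fin n × Fin p → ℝ) → ℝ)
    (hNRtri : ∀ z w, NR (z + w) ≤ NR z + NR w)
    (hNRhom : ∀ (a : ℝ) z, NR (a • z) = |a| * NR z)
    (hNRdef : ∀ z, NR z = 0 ↔ z = 0)
    (hNRge : ∀ z, eucNorm z ≤ NR z)
    (κ₃ : ℝ) (hκ₃ : 0 < κ₃) (hκ₃R : ∀ z, NR z ≤ κ₃ * eucNorm z)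
    (vt : ℝ) (hvt : vt = ⨆ k : ℕ, specNorm (VtinvK n p Rb k))
    (σR : ℝ) (hσRdef : σR = opNorm NR (RK n p Rb - VinfK n p π))
    (hσR0 : 0 < σR) (hσR1 : σR < 1) :
    ∀ k : ℕ, 1 ≤ k → ∀ z z' : Fin n × Fin p → ℝ,
      eucNorm ((VtinvK n p Rb k).mulVec (gradf g z)
          - (VtinvK n p Rb (k - 1)).mulVec (gradf g z')) ≤
        vt * L * NR (z - z')
          + 2 * vt ^ 2 * Real.sqrt n * κ₃ * σR ^ (k - 1) * eucNorm (gradf g z) :=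
  stmt12_general n p hn hp Rb hnonneg hrow hdiag π hπpos hπsum hπstat g L hL hLip NR hNRge κ₃ hκ₃R
    vt hvt σR hσRdef hσR1
end

section
/- Let δ₁ > L/μ, let 0 < δ₂ < (1 − σ_C)/(κ₂ r), and let α satisfy 0 < α < min{ ((1 − σ_C) − κ₂ r δ₂)/(s₁(1 + δ₁) + s₂ δ₂), (1 − σ_R) δ₂/(s₄(1 + δ₁) + s₅ δ₂ + s_β), 1/(nL) }. Then the nonnegative 3×3 matrix Υ = [[σ_C + α s₁, α s₁, κ₂ r + α s₂], [α s₃, 1 − α n μ, 0], [α(s_β + s₄), α s₄, σ_R + α s₅]] has spectral radius strictly less than 1. -/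
open Matrix Filter
open scoped Kronecker

/-!
Take `u = (1, δ₁, δ₂)`. The first two bounds on `α` are exactly the first and third rows of
`Υ u < u`; the middle row reads `α n L < α n μ δ₁`, i.e. `δ₁ > L / μ`, and `α < 1 / (n L)` keeps
`Υ` nonnegative. For a nonnegative matrix with `Υ u < u`, evaluating the eigen-equation at a
row where `|w_j| / u_j` is maximal gives `|λ| < 1`.
-/

theorem exists_norm_le_norm_div_mul {ι E : Type*} [Fintype ι] [NormedAddCommGroup E]
    {w : ι → E} (hw : w ≠ 0) {u : ι → ℝ} (hu : ∀ j, 0 < u j) :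
    ∃ i, 0 < ‖w i‖ ∧ ∀ j, ‖w j‖ ≤ ‖w i‖ / u i * u j := by
  obtain ⟨k, hk⟩ := Function.ne_iff.mp hw
  obtain ⟨i, -, hi⟩ :=
    Finset.exists_max_image Finset.univ (fun j => ‖w j‖ / u j) ⟨k, Finset.mem_univ k⟩
  have hle : ∀ j, ‖w j‖ ≤ ‖w i‖ / u i * u j := fun j =>
    (div_le_iff₀ (hu j)).mp (hi j (Finset.mem_univ j))
  refine ⟨i, ?_, hle⟩
  have hk : 0 < ‖w i‖ / u i * u k := (norm_pos_iff.mpr hk).trans_le (hle k)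
  exact (div_pos_iff_of_pos_right (hu i)).mp (pos_of_mul_pos_left hk (hu k).le)

theorem Matrix.norm_lt_one_of_hasEigenvector_of_mulVec_lt {ι : Type*} [Fintype ι]
    {A : Matrix ι ι ℝ} (hA : ∀ i j, 0 ≤ A i j) {u : ι → ℝ} (hu : ∀ j, 0 < u j)
    (hAu : ∀ i, (A *ᵥ u) i < u i) {lam : ℂ} {w : ι → ℂ} (hw : w ≠ 0)
    (heig : A.map (Complex.ofReal ·) *ᵥ w = lam • w) :
    ‖lam‖ < 1 := by
  obtain ⟨i, hwi, hmax⟩ := exists_norm_le_norm_div_mul hw hu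
  have hrow : lam * w i = ∑ j, (A i j : ℂ) * w j := by
    simpa [Matrix.mulVec, dotProduct] using (congrFun heig i).symm
  refine (mul_lt_iff_lt_one_left hwi).mp ?_
  calc ‖lam‖ * ‖w i‖
      ≤ ∑ j, ‖(A i j : ℂ) * w j‖ := by rw [← norm_mul, hrow]; exact norm_sum_le _ _
    _ = ∑ j, A i j * ‖w j‖ := by
        simp only [norm_mul, Complex.norm_real, Real.norm_of_nonneg (hA i _)]
    _ ≤ ∑ j, A i j * (‖w i‖ / u i * u j) :=
        Finset.sum_le_sum fun j _ => mul_le_mul_of_nonneg_left (hmax j) (hA i j)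
    _ = ‖w i‖ / u i * (A *ᵥ u) i := by
        simp only [Matrix.mulVec, dotProduct, Finset.mul_sum, mul_left_comm]
    _ < ‖w i‖ / u i * u i := mul_lt_mul_of_pos_left (hAu i) (div_pos hwi (hu i))
    _ = ‖w i‖ := div_mul_cancel₀ _ (hu i).ne'

theorem stmt16_general (n : ℕ) (hn : 1 ≤ n) (μ L : ℝ) (hμ : 0 < μ) (hμL : μ ≤ L)
    (σC σR : ℝ) (hσC0 : 0 < σC) (hσR0 : 0 < σR)
    (κ₁ κ₂ κ₃ κ₄ v vt β : ℝ)
    (hκ₁ : 0 < κ₁) (hκ₂ : 0 < κ₂) (hκ₃ : 0 < κ₃) (hκ₄ : 0 < κ₄)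
    (hv : 0 < v) (hvt : 0 < vt) (hβ : 0 < β)
    (r q : ℝ) (hr : 1 ≤ r) (hq : 0 ≤ q)
    (s₁ s₂ s₃ s₄ s₅ sβ : ℝ)
    (hs₁ : s₁ = κ₄ * n * L) (hs₂ : s₂ = κ₄ * vt * L) (hs₃ : s₃ = n * L)
    (hs₄ : s₄ = κ₃ * n * L) (hs₅ : s₅ = κ₃ * (1 + v) * vt * L) (hsβ : sβ = β * κ₁ * q)
    (δ₁ δ₂ : ℝ) (hδ₁ : L / μ < δ₁) (hδ₂0 : 0 < δ₂)
    (α : ℝ) (hα0 : 0 < α)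
    (hα : α < min (min (((1 - σC) - κ₂ * r * δ₂) / (s₁ * (1 + δ₁) + s₂ * δ₂))
          ((1 - σR) * δ₂ / (s₄ * (1 + δ₁) + s₅ * δ₂ + sβ))) (1 / (n * L))) :
    ∀ lam : ℂ,
      (∃ w : Fin 3 → ℂ, w ≠ 0 ∧
          ((!![σC + α * s₁, α * s₁, κ₂ * r + α * s₂;
               α * s₃, 1 - α * n * μ, 0;
               α * (sβ + s₄), α * s₄, σR + α * s₅]).map
              (Complex.ofReal ·)).mulVec w = lam • w) →
        ‖lam‖ < 1 := by
  rintro lam ⟨w, hw, heig⟩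
  subst hs₁ hs₂ hs₃ hs₄ hs₅ hsβ
  have hL : 0 < L := hμ.trans_le hμL
  have hn0 : (0 : ℝ) < n := by exact_mod_cast hn
  have hδ₁0 : 0 < δ₁ := (div_pos hL hμ).trans hδ₁
  have hr0 : 0 < r := one_pos.trans_le hr
  obtain ⟨⟨hα₁, hα₂⟩, hα₃⟩ := And.imp_left lt_min_iff.mp (lt_min_iff.mp hα)
  have hrow₁ := (lt_div_iff₀ (by positivity)).mp hα₁
  have hrow₃ := (lt_div_iff₀ (by positivity)).mp hα₂
  have hαnL := (lt_div_iff₀ (by positivity)).mp hα₃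
  have hLμ := (div_lt_iff₀ hμ).mp hδ₁
  have hdiag : 0 ≤ 1 - α * n * μ := by
    nlinarith [mul_le_mul_of_nonneg_left hμL (by positivity : 0 ≤ α * n)]
  refine Matrix.norm_lt_one_of_hasEigenvector_of_mulVec_lt (u := ![1, δ₁, δ₂]) ?_ ?_ ?_ hw heig
  · intro i j
    fin_cases i <;> fin_cases j <;>
      simp only [Fin.isValue, Fin.zero_eta, Fin.mk_one, Fin.reduceFinMk, of_apply, cons_val',
        cons_val, cons_val_zero, cons_val_one, cons_val_fin_one] <;>
      first | exact hdiag | positivity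
  · intro j
    fin_cases j <;> simp [hδ₁0, hδ₂0]
  · intro i
    fin_cases i <;>
      simp only [mulVec, dotProduct, Fin.sum_univ_three, Fin.isValue, Fin.zero_eta, Fin.mk_one,
        Fin.reduceFinMk, of_apply, cons_val', cons_val, cons_val_zero, cons_val_one,
        cons_val_fin_one]
    · linarith
    · linear_combination (α * n) * hLμ
    · linarith

/-- Theorem 1: under the stated step-size condition, the nonnegative
`3×3` matrix `Υ` has spectral radius strictly less than 1 (every complex eigenvalue has
modulus `< 1`). -/
theorem stmt16 (n : ℕ) (hn : 1 ≤ n) (μ L : ℝ) (hμ : 0 < μ) (hμL : μ ≤ L)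
    (σC σR : ℝ) (hσC0 : 0 < σC) (hσC1 : σC < 1) (hσR0 : 0 < σR) (hσR1 : σR < 1)
    (κ₁ κ₂ κ₃ κ₄ v vt β : ℝ)
    (hκ₁ : 0 < κ₁) (hκ₂ : 0 < κ₂) (hκ₃ : 0 < κ₃) (hκ₄ : 0 < κ₄)
    (hv : 0 < v) (hvt : 0 < vt) (hβ : 0 < β)
    (r q : ℝ) (hr : 1 ≤ r) (hq : 0 ≤ q)
    (s₁ s₂ s₃ s₄ s₅ sβ : ℝ)
    (hs₁ : s₁ = κ₄ * n * L) (hs₂ : s₂ = κ₄ * vt * L) (hs₃ : s₃ = n * L)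
    (hs₄ : s₄ = κ₃ * n * L) (hs₅ : s₅ = κ₃ * (1 + v) * vt * L) (hsβ : sβ = β * κ₁ * q)
    (δ₁ δ₂ : ℝ) (hδ₁ : L / μ < δ₁) (hδ₂0 : 0 < δ₂) (hδ₂ : δ₂ < (1 - σC) / (κ₂ * r))
    (α : ℝ) (hα0 : 0 < α)
    (hα : α < min (min (((1 - σC) - κ₂ * r * δ₂) / (s₁ * (1 + δ₁) + s₂ * δ₂))
          ((1 - σR) * δ₂ / (s₄ * (1 + δ₁) + s₅ * δ₂ + sβ))) (1 / (n * L))) :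
    ∀ lam : ℂ,
      (∃ w : Fin 3 → ℂ, w ≠ 0 ∧
          ((!![σC + α * s₁, α * s₁, κ₂ * r + α * s₂;
               α * s₃, 1 - α * n * μ, 0;
               α * (sβ + s₄), α * s₄, σR + α * s₅]).map
              (Complex.ofReal ·)).mulVec w = lam • w) →
        ‖lam‖ < 1 :=
  stmt16_general n hn μ L hμ hμL σC σR hσC0 hσR0 κ₁ κ₂ κ₃ κ₄ v vt β hκ₁ hκ₂ hκ₃ hκ₄ hv hvt hβ r q hr
    hq s₁ s₂ s₃ s₄ s₅ sβ hs₁ hs₂ hs₃ hs₄ hs₅ hsβ δ₁ δ₂ hδ₁ hδ₂0 α hα0 hα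
end

section
/- Let (a_k), (b_k), (c_k), (d_k) be sequences of nonnegative real numbers such that Σ_{k=0}^∞ c_k < ∞, Σ_{k=0}^∞ d_k < ∞, and a_{k+1} ≤ (1 + c_k) a_k − b_k + d_k for all k ≥ 0. Then the sequence (a_k) converges and Σ_{k=0}^∞ b_k < ∞. -/
open Matrix Filter
open scoped Kronecker

/- With `P k = ∏_{j<k} (1 + c j)` (nondecreasing, convergent, `≥ 1`), the normalised sequence
`A k = a k / P k` satisfies `A (k+1) ≤ A k - b k / P (k+1) + d k / P (k+1)`. For such a recursion
without the factor `1 + c k`, `A k + ∑_{j<k} b j / P (j+1) - ∑_{j<k} d j / P (j+1)` is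
nonincreasing and bounded below, hence convergent; this yields convergence of `A` and summability
of `b / P (· + 1)`, and multiplying back by the bounded convergent `P` gives the claim. -/

theorem exists_tendsto_and_summable_of_succ_le_sub_add (x β δ : ℕ → ℝ)
    (hx : ∀ k, 0 ≤ x k) (hβ : ∀ k, 0 ≤ β k) (hδ : Summable δ)
    (hrec : ∀ k, x (k + 1) ≤ x k - β k + δ k) :
    (∃ l, Tendsto x atTop (nhds l)) ∧ Summable β := by
  set B : ℕ → ℝ := fun k => ∑ j ∈ Finset.range k, β j
  set D : ℕ → ℝ := fun k => ∑ j ∈ Finset.range k, δ j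
  set u : ℕ → ℝ := fun k => x k + B k - D k
  have hD : Tendsto D atTop (nhds (∑' j, δ j)) := hδ.hasSum.tendsto_sum_nat
  obtain ⟨M, hM⟩ := hD.bddAbove_range
  have hDM : ∀ k, D k ≤ M := fun k => hM ⟨k, rfl⟩
  have hB_nonneg : ∀ k, 0 ≤ B k := fun k => Finset.sum_nonneg fun j _ => hβ j
  have hu_anti : Antitone u := by
    refine antitone_nat_of_succ_le fun k => ?_
    simp only [u, B, D, Finset.sum_range_succ]
    linarith [hrec k]
  have hu_bdd : BddBelow (Set.range u) := by
    refine ⟨-M, ?_⟩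
    rintro _ ⟨k, rfl⟩
    linarith [hx k, hB_nonneg k, hDM k]
  have hβ_sum : Summable β := by
    refine summable_of_sum_range_le hβ (c := u 0 + M) fun k => ?_
    linarith [hu_anti (Nat.zero_le k), hx k, hDM k]
  have hu : Tendsto u atTop (nhds (⨅ k, u k)) := tendsto_atTop_ciInf hu_anti hu_bdd
  have hB : Tendsto B atTop (nhds (∑' j, β j)) := hβ_sum.hasSum.tendsto_sum_nat
  refine ⟨⟨_, ((hu.sub hB).add hD).congr fun k => ?_⟩, hβ_sum⟩
  simp only [u]
  ring

theorem one_le_prod_range_one_add {c : ℕ → ℝ} (hc : ∀ k, 0 ≤ c k) (k : ℕ) :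
    1 ≤ ∏ j ∈ Finset.range k, (1 + c j) :=
  Finset.one_le_prod fun j _ => le_add_of_nonneg_right (hc j)

theorem tendsto_prod_range_one_add {c : ℕ → ℝ} (hc : Summable c) :
    Tendsto (fun k => ∏ j ∈ Finset.range k, (1 + c j)) atTop (nhds (∏' j, (1 + c j))) :=
  (Real.multipliable_one_add_of_summable hc).hasProd.tendsto_prod_nat

theorem div_succ_le_of_succ_le_one_add_mul {x β δ c P : ℕ → ℝ}
    (hP : ∀ k, 0 < P k) (hP_succ : ∀ k, P (k + 1) = P k * (1 + c k))
    (hrec : ∀ k, x (k + 1) ≤ (1 + c k) * x k - β k + δ k) (k : ℕ) :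
    x (k + 1) / P (k + 1) ≤ x k / P k - β k / P (k + 1) + δ k / P (k + 1) := by
  have hPk := hP k
  have hPk1 := hP (k + 1)
  have hck : 0 < 1 + c k := pos_of_mul_pos_right (hP_succ k ▸ hPk1) hPk.le
  have hxk : x k / P k = (1 + c k) * x k / P (k + 1) := by
    rw [hP_succ k, mul_comm (P k), mul_div_mul_left _ _ hck.ne']
  rw [hxk, ← sub_div, ← add_div]
  exact div_le_div_of_nonneg_right (hrec k) hPk1.le

theorem stmt17_general (a b c d : ℕ → ℝ)
    (ha : ∀ k, 0 ≤ a k) (hb : ∀ k, 0 ≤ b k) (hc : ∀ k, 0 ≤ c k)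
    (hcs : Summable c) (hds : Summable d)
    (hrec : ∀ k, a (k + 1) ≤ (1 + c k) * a k - b k + d k) :
    (∃ l : ℝ, Tendsto a atTop (nhds l)) ∧ Summable b := by
  set P : ℕ → ℝ := fun k => ∏ j ∈ Finset.range k, (1 + c j)
  have hP_one : ∀ k, 1 ≤ P k := one_le_prod_range_one_add hc
  have hP_pos : ∀ k, 0 < P k := fun k => one_pos.trans_le (hP_one k)
  have hP : Tendsto P atTop (nhds (∏' j, (1 + c j))) := tendsto_prod_range_one_add hcs
  obtain ⟨M, hM⟩ := hP.bddAbove_range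
  have hd_div : Summable fun k => d k / P (k + 1) :=
    hds.abs.of_norm_bounded fun k => by
      rw [Real.norm_eq_abs, abs_div, abs_of_pos (hP_pos _)]
      exact div_le_self (abs_nonneg _) (hP_one _)
  obtain ⟨⟨l, hl⟩, hb_div⟩ := exists_tendsto_and_summable_of_succ_le_sub_add
    (fun k => a k / P k) (fun k => b k / P (k + 1)) _
    (fun k => div_nonneg (ha k) (hP_pos k).le) (fun k => div_nonneg (hb k) (hP_pos _).le) hd_div
    (div_succ_le_of_succ_le_one_add_mul hP_pos (fun k => Finset.prod_range_succ _ k) hrec)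
  refine ⟨⟨_, (hl.mul hP).congr fun k => div_mul_cancel₀ _ (hP_pos k).ne'⟩, ?_⟩
  refine (hb_div.mul_right M).of_nonneg_of_le hb fun k => ?_
  calc b k = b k / P (k + 1) * P (k + 1) := (div_mul_cancel₀ _ (hP_pos _).ne').symm
    _ ≤ b k / P (k + 1) * M :=
      mul_le_mul_of_nonneg_left (hM ⟨_, rfl⟩) (div_nonneg (hb k) (hP_pos _).le)

/-- deterministic supermartingale lemma: if `a, b, c, d ≥ 0`,
`Σ c_k < ∞`, `Σ d_k < ∞` and `a_{k+1} ≤ (1 + c_k) a_k − b_k + d_k`, then `(a_k)`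
converges and `Σ b_k < ∞`. -/
theorem stmt17 (a b c d : ℕ → ℝ)
    (ha : ∀ k, 0 ≤ a k) (hb : ∀ k, 0 ≤ b k) (hc : ∀ k, 0 ≤ c k) (hd : ∀ k, 0 ≤ d k)
    (hcs : Summable c) (hds : Summable d)
    (hrec : ∀ k, a (k + 1) ≤ (1 + c k) * a k - b k + d k) :
    (∃ l : ℝ, Tendsto a atTop (nhds l)) ∧ Summable b :=
  stmt17_general a b c d ha hb hc hcs hds hrec
end
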